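/- If X | φ has density proportional to (x)^{-1/2-1} exp(-1/(φ x)) on (0,∞) (i.e., X | φ ~ InverseGamma(1/2, 1/φ)) and φ ~ InverseGamma(1/2, 1/ψ²), then √X has the half-Cauchy distribution C⁺(0, ψ), i.e., the marginal density of Y = √X is (2/π) · ψ/(ψ² + y²) for y > 0. -/
import Mathlib


open MeasureTheory Real

lemma invGamma_aux (c : ℝ) (hc : 0 < c) :
    ∫ x in Set.Ioi (0:ℝ), x ^ (-(2:ℝ)) * Real.exp (-(c/x)) = 1/c := by
  have hsub := MeasureTheory.integral_comp_rpow_Ioi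
    (fun u => Real.exp (-(c*u))) (p := -1) (by norm_num)
  have hrhs : ∫ u in Set.Ioi (0:ℝ), Real.exp (-(c*u)) = 1/c := by
    have h := Real.integral_rpow_mul_exp_neg_mul_Ioi (a := 1) one_pos hc
    simpa [Real.rpow_one, Real.Gamma_one] using h
  rw [← hrhs, ← hsub]
  refine setIntegral_congr_fun measurableSet_Ioi (fun x hx => ?_)
  have hx0 : (0:ℝ) < x := hx
  rw [smul_eq_mul]
  rw [Real.rpow_neg_one]
  norm_num
  exact Or.inl (div_eq_mul_inv c x)

/-- Mixing InverseGamma(1/2, 1/φ) over φ ~ InverseGamma(1/2, 1/ψ²) yields a half-Cauchy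
square: the marginal density of Y = √X at y > 0 (obtained from the conditional density of
X at y² times the Jacobian 2y of the map y ↦ y², integrated against the mixing density)
equals the half-Cauchy C⁺(0,ψ) density (2/π)·ψ/(ψ²+y²). -/
theorem halfCauchy_as_invGamma_mixture (ψ : ℝ) (hψ : 0 < ψ) (y : ℝ) (hy : 0 < y) :
    ∫ φ in Set.Ioi (0:ℝ),
        (((1/φ) ^ ((1:ℝ)/2) / Real.Gamma (1/2)) * (y^2) ^ (-(1:ℝ)/2 - 1) *
          Real.exp (-(1/φ) / y^2) * (2*y)) *
        (((1/ψ^2) ^ ((1:ℝ)/2) / Real.Gamma (1/2)) * φ ^ (-(1:ℝ)/2 - 1) *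
          Real.exp (-(1/ψ^2) / φ))
      = (2 / π) * (ψ / (ψ^2 + y^2)) := by
  set c : ℝ := 1/y^2 + 1/ψ^2 with hcdef
  have hc : 0 < c := by positivity
  have hyne : y ≠ 0 := hy.ne'
  have hψne : ψ ≠ 0 := hψ.ne'
  have key : (∫ φ in Set.Ioi (0:ℝ),
        (((1/φ) ^ ((1:ℝ)/2) / Real.Gamma (1/2)) * (y^2) ^ (-(1:ℝ)/2 - 1) *
          Real.exp (-(1/φ) / y^2) * (2*y)) *
        (((1/ψ^2) ^ ((1:ℝ)/2) / Real.Gamma (1/2)) * φ ^ (-(1:ℝ)/2 - 1) *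
          Real.exp (-(1/ψ^2) / φ)))
      = ∫ φ in Set.Ioi (0:ℝ), (2/(π*ψ*y^2)) * (φ ^ (-(2:ℝ)) * Real.exp (-(c/φ))) := by
    refine setIntegral_congr_fun measurableSet_Ioi (fun φ hφ => ?_)
    have hφ0 : (0:ℝ) < φ := hφ
    have hφne : φ ≠ 0 := hφ0.ne'
    have h1 : (1/φ) ^ ((1:ℝ)/2) = φ ^ (-((1:ℝ)/2)) := by
      rw [one_div, Real.inv_rpow hφ0.le, ← Real.rpow_neg hφ0.le]
    have h2 : ((y^2:ℝ)) ^ (-(1:ℝ)/2 - 1) = y ^ (-(3:ℝ)) := by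
      rw [← Real.rpow_natCast y 2, ← Real.rpow_mul hy.le]
      norm_num
    have h3 : ((1/ψ^2:ℝ)) ^ ((1:ℝ)/2) = ψ⁻¹ := by
      rw [one_div, Real.inv_rpow (by positivity), ← Real.rpow_natCast ψ 2,
        ← Real.rpow_mul hψ.le]
      norm_num
    have hexp : Real.exp (-(1/φ) / y^2) * Real.exp (-(1/ψ^2) / φ)
        = Real.exp (-(c/φ)) := by
      rw [← Real.exp_add]
      congr 1
      rw [hcdef]
      field_simp
      ring
    have hpow : φ ^ (-((1:ℝ)/2)) * φ ^ (-(1:ℝ)/2 - 1) = φ ^ (-(2:ℝ)) := by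
      rw [← Real.rpow_add hφ0]
      norm_num
    have hy3 : y ^ (-(3:ℝ)) * (2*y) = 2 * (y^2)⁻¹ := by
      rw [Real.rpow_neg hy.le, show (3:ℝ) = ((3:ℕ):ℝ) by norm_num,
        Real.rpow_natCast]
      field_simp
    calc (((1/φ) ^ ((1:ℝ)/2) / Real.Gamma (1/2)) * (y^2) ^ (-(1:ℝ)/2 - 1) *
          Real.exp (-(1/φ) / y^2) * (2*y)) *
        (((1/ψ^2) ^ ((1:ℝ)/2) / Real.Gamma (1/2)) * φ ^ (-(1:ℝ)/2 - 1) *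
          Real.exp (-(1/ψ^2) / φ))
        = (φ ^ (-((1:ℝ)/2)) * φ ^ (-(1:ℝ)/2 - 1)) *
            (Real.exp (-(1/φ) / y^2) * Real.exp (-(1/ψ^2) / φ)) *
            (y ^ (-(3:ℝ)) * (2*y)) *
            (ψ⁻¹ / (Real.Gamma (1/2) * Real.Gamma (1/2))) := by
          rw [h1, h2, h3]; ring
      _ = (2/(π*ψ*y^2)) * (φ ^ (-(2:ℝ)) * Real.exp (-(c/φ))) := by
          rw [hpow, hexp, hy3, Real.Gamma_one_half_eq,
            Real.mul_self_sqrt Real.pi_pos.le]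
          field_simp
  rw [key, MeasureTheory.integral_const_mul, invGamma_aux c hc]
  rw [hcdef]
  have hπ : (π:ℝ) ≠ 0 := Real.pi_ne_zero
  field_simp
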